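/- There exists a coloring of the vertices and edges of the Coxeter graph Γ by points of the Fano plane, i.e., functions c_V from the vertices of Γ to ZMod 7 and c_E from the edges of Γ to ZMod 7, such that: (a) for every vertex v of Γ, the three colors of the edges incident to v are pairwise distinct and form a line of the Fano plane; and (b) for every edge e of Γ with endpoints u and w, the three values c_E(e), c_V(u), c_V(w) are pairwise distinct and form a line of the Fano plane. -/
import Mathlib


/-- Vertex set of the Coxeter graph: four concentric 7-tuples `u, v, t, z`. -/
abbrev CoxeterVertex := Fin 4 × ZMod 7

/-- Base (asymmetric) adjacency relation for the Coxeter graph: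
`u_x ~ u_{x+1}`, `v_x ~ v_{x+2}`, `t_x ~ t_{x+3}`, and `z_x ~ u_x, v_x, t_x`. -/
def coxeterRel : CoxeterVertex → CoxeterVertex → Prop := fun p q =>
  (p.1 = 0 ∧ q.1 = 0 ∧ q.2 = p.2 + 1) ∨
  (p.1 = 1 ∧ q.1 = 1 ∧ q.2 = p.2 + 2) ∨
  (p.1 = 2 ∧ q.1 = 2 ∧ q.2 = p.2 + 3) ∨
  (p.1 = 3 ∧ (q.1 = 0 ∨ q.1 = 1 ∨ q.1 = 2) ∧ q.2 = p.2)

/-- The Coxeter graph on 28 vertices. -/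
def coxeterGraph : SimpleGraph CoxeterVertex := SimpleGraph.fromRel coxeterRel

/-- Lines of the Fano plane on point set `ZMod 7`: the triples `{x, x+1, x+3}`. -/
def IsFanoLine (s : Set (ZMod 7)) : Prop :=
  ∃ x : ZMod 7, s = {x, x + 1, x + 3}

instance : DecidableRel coxeterRel := fun p q => by unfold coxeterRel; infer_instance

/-- A concrete decidable form of the adjacency of the Coxeter graph. -/
def adj' (p q : CoxeterVertex) : Prop := p ≠ q ∧ (coxeterRel p q ∨ coxeterRel q p)

instance : DecidableRel adj' := fun p q => by unfold adj'; infer_instance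

lemma adj_iff (p q : CoxeterVertex) : coxeterGraph.Adj p q ↔ adj' p q := by
  simp [coxeterGraph, SimpleGraph.fromRel_adj, adj']

def dd : Fin 4 → ZMod 7 := ![1, 2, 3, 0]
def aa : Fin 4 → ZMod 7 := ![3, 6, 5, 0]
def bb : Fin 4 → ZMod 7 := ![6, 5, 6, 0]
def gg : Fin 4 → ZMod 7 := ![1, 2, 4, 0]

/-- The vertex coloring. -/
def myCV (p : CoxeterVertex) : ZMod 7 := aa p.1 + p.2

/-- The edge coloring, as a symmetric function on ordered pairs. -/
def ff (p q : CoxeterVertex) : ZMod 7 :=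
  if p.1 = 3 ∧ q.1 ≠ 3 then gg q.1 + q.2
  else if q.1 = 3 ∧ p.1 ≠ 3 then gg p.1 + p.2
  else if p.1 = q.1 ∧ q.2 = p.2 + dd p.1 then bb p.1 + p.2
  else if p.1 = q.1 ∧ p.2 = q.2 + dd p.1 then bb p.1 + q.2
  else 0

lemma ff_symm : ∀ p q : CoxeterVertex, ff p q = ff q p := by decide

/-- The edge coloring, on unordered pairs. -/
def myCE : Sym2 CoxeterVertex → ZMod 7 := Sym2.lift ⟨ff, ff_symm⟩

lemma myCE_mk (p q : CoxeterVertex) : myCE s(p, q) = ff p q := rfl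

lemma key1 : ∀ v w₁ w₂ : CoxeterVertex, adj' v w₁ → adj' v w₂ → w₁ ≠ w₂ →
    ff v w₁ ≠ ff v w₂ := by decide

lemma key2 : ∀ v : CoxeterVertex, ∃ x : ZMod 7, ∀ c : ZMod 7,
    (∃ w, adj' v w ∧ ff v w = c) ↔ (c = x ∨ c = x + 1 ∨ c = x + 3) := by decide

lemma key3 : ∀ u w : CoxeterVertex, adj' u w →
    ff u w ≠ myCV u ∧ ff u w ≠ myCV w ∧ myCV u ≠ myCV w ∧
    ∃ x : ZMod 7, ∀ c : ZMod 7,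
      (c = ff u w ∨ c = myCV u ∨ c = myCV w) ↔ (c = x ∨ c = x + 1 ∨ c = x + 3) := by
  decide

/-- Any edge through `v` has the form `s(v, w)` for some neighbor `w`. -/
lemma mem_edge (v : CoxeterVertex) (e : Sym2 CoxeterVertex)
    (he : e ∈ coxeterGraph.edgeSet) (hv : v ∈ e) :
    ∃ w, coxeterGraph.Adj v w ∧ e = s(v, w) := by
  induction e using Sym2.ind with
  | _ a b =>
    rw [SimpleGraph.mem_edgeSet] at he
    rcases Sym2.mem_iff.mp hv with rfl | rfl
    · exact ⟨b, he, rfl⟩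
    · exact ⟨a, he.symm, Sym2.eq_swap⟩

/-- There is a coloring of the vertices and edges of the Coxeter graph with
points of the Fano plane such that (a) the three edges at each vertex get
pairwise distinct colors forming a line, and (b) for each edge, the color of
the edge and the colors of its two endpoints are pairwise distinct and form a
line. -/
theorem coxeterGraph_fano_coloring :
    ∃ (cV : CoxeterVertex → ZMod 7) (cE : Sym2 CoxeterVertex → ZMod 7),
      (∀ v : CoxeterVertex,
        (∀ e₁ e₂ : Sym2 CoxeterVertex, e₁ ∈ coxeterGraph.edgeSet →
          e₂ ∈ coxeterGraph.edgeSet → v ∈ e₁ → v ∈ e₂ → e₁ ≠ e₂ → cE e₁ ≠ cE e₂) ∧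
        IsFanoLine {c | ∃ e ∈ coxeterGraph.edgeSet, v ∈ e ∧ cE e = c}) ∧
      (∀ u w : CoxeterVertex, coxeterGraph.Adj u w →
        cE s(u, w) ≠ cV u ∧ cE s(u, w) ≠ cV w ∧ cV u ≠ cV w ∧
        IsFanoLine {cE s(u, w), cV u, cV w}) := by
  refine ⟨myCV, myCE, fun v => ⟨?_, ?_⟩, fun u w huw => ?_⟩
  · intro e₁ e₂ he₁ he₂ hv₁ hv₂ hne
    obtain ⟨w₁, hw₁, rfl⟩ := mem_edge v e₁ he₁ hv₁
    obtain ⟨w₂, hw₂, rfl⟩ := mem_edge v e₂ he₂ hv₂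
    have hww : w₁ ≠ w₂ := by
      rintro rfl; exact hne rfl
    rw [myCE_mk, myCE_mk]
    exact key1 v w₁ w₂ ((adj_iff v w₁).mp hw₁) ((adj_iff v w₂).mp hw₂) hww
  · obtain ⟨x, hx⟩ := key2 v
    refine ⟨x, Set.ext fun c => ?_⟩
    have : (∃ e ∈ coxeterGraph.edgeSet, v ∈ e ∧ myCE e = c) ↔
        ∃ w, adj' v w ∧ ff v w = c := by
      constructor
      · rintro ⟨e, he, hv, hc⟩
        obtain ⟨w, hw, rfl⟩ := mem_edge v e he hv
        exact ⟨w, (adj_iff v w).mp hw, hc⟩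
      · rintro ⟨w, hw, hc⟩
        exact ⟨s(v, w), (coxeterGraph.mem_edgeSet).mpr ((adj_iff v w).mpr hw),
          Sym2.mem_mk_left v w, hc⟩
    simp only [Set.mem_setOf_eq, this, hx c, Set.mem_insert_iff, Set.mem_singleton_iff]
  · have h := key3 u w ((adj_iff u w).mp huw)
    obtain ⟨h1, h2, h3, x, hx⟩ := h
    refine ⟨by rw [myCE_mk]; exact h1, by rw [myCE_mk]; exact h2, h3, x, Set.ext fun c => ?_⟩
    simp only [Set.mem_insert_iff, Set.mem_singleton_iff, myCE_mk]
    exact hx c
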